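/- For every natural number m, the polynomial p_m(x) = Σ_{k=0}^{m} (−1)^{k+1}·C(2k, k)·(x² − 1)^k / (4^k·(2k − 1)) interpolates the absolute value function together with its first m derivatives at x = 1 and x = −1. Precisely: for every l with 0 ≤ l ≤ m, the l-th derivative of the function x ↦ p_m(x) − x vanishes at x = 1, and the l-th derivative of the function x ↦ p_m(x) + x vanishes at x = −1. -/

import Mathlib

/-- The degree-`2m` polynomial function
`p_m(x) = ∑_{k=0}^{m} (-1)^{k+1}·C(2k,k)·(x²-1)^k/(4^k·(2k-1))`. -/
noncomputable def hermiteAbsApprox (m : ℕ) (x : ℝ) : ℝ :=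
  ∑ k ∈ Finset.range (m + 1),
    (-1 : ℝ) ^ (k + 1) * (Nat.centralBinom k : ℝ) * (x ^ 2 - 1) ^ k /
      ((4 : ℝ) ^ k * (2 * (k : ℝ) - 1))

open Polynomial Finset

/-- The coefficient `(-1)^{k+1}·C(2k,k)/(4^k·(2k-1))`, i.e. the generalized binomial
coefficient `binom(1/2, k)`. -/
noncomputable def hermC (k : ℕ) : ℝ :=
  (-1 : ℝ) ^ (k + 1) * (Nat.centralBinom k : ℝ) / ((4 : ℝ) ^ k * (2 * (k : ℝ) - 1))

lemma hermC_zero : hermC 0 = 1 := by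
  simp [hermC]

lemma centralBinom_succ_eq (k : ℕ) :
    Nat.centralBinom (k + 1) = 2 * (2 * k + 1) * catalan k := by
  have h1 := Nat.succ_mul_centralBinom_succ k
  have h2 := succ_mul_catalan_eq_centralBinom k
  have : (k + 1) * Nat.centralBinom (k + 1) = (k + 1) * (2 * (2 * k + 1) * catalan k) := by
    rw [h1, ← h2]; ring
  exact Nat.eq_of_mul_eq_mul_left (Nat.succ_pos k) this

lemma hermC_succ (k : ℕ) :
    hermC (k + 1) = (-1 : ℝ) ^ k * (catalan k : ℝ) / (2 * 4 ^ k) := by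
  have h : (Nat.centralBinom (k + 1) : ℝ) = 2 * (2 * k + 1) * catalan k := by
    exact_mod_cast congrArg (Nat.cast : ℕ → ℝ) (centralBinom_succ_eq k)
  rw [hermC]
  push_cast
  rw [h, show (2 * ((k:ℝ)+1) - 1) = 2*k+1 by ring]
  have h4 : ((4 : ℝ) ^ (k+1) * (2 * (k : ℝ) + 1)) ≠ 0 := by positivity
  have h5 : (2 * (4:ℝ) ^ k) ≠ 0 := by positivity
  field_simp
  ring

lemma hermC_one : hermC 1 = 1/2 := by
  rw [show hermC 1 = hermC (0 + 1) from rfl, hermC_succ]; simp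

/-- The key convolution identity: for `n ≥ 2`, `∑_{i+j=n} c_i c_j = 0`
(reflecting `(√(1+t))² = 1 + t`). -/
lemma hermC_conv (n : ℕ) (hn : 2 ≤ n) :
    ∑ i ∈ range (n + 1), hermC i * hermC (n - i) = 0 := by
  obtain ⟨k, rfl⟩ : ∃ k, n = k + 2 := ⟨n - 2, by omega⟩
  rw [Finset.sum_range_succ' (fun i => hermC i * hermC (k + 2 - i)) (k+2)]
  rw [Finset.sum_range_succ]
  have hmid : ∀ i ∈ range (k+1),
      hermC (i + 1) * hermC (k + 2 - (i + 1)) =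
        (-1:ℝ)^k / (4 * 4 ^ k) * ((catalan i : ℝ) * (catalan (k - i) : ℝ)) := by
    intro i hi
    have hik : i ≤ k := by simpa using Nat.lt_succ_iff.mp (mem_range.mp hi)
    have he : k + 2 - (i + 1) = (k - i) + 1 := by omega
    rw [he, hermC_succ, hermC_succ]
    have hs1 : (-1:ℝ)^i * (-1:ℝ)^(k-i) = (-1:ℝ)^k := by
      rw [← pow_add]; congr 1; omega
    have hs2 : (4:ℝ)^i * (4:ℝ)^(k-i) = (4:ℝ)^k := by
      rw [← pow_add]; congr 1; omega
    calc (-1:ℝ)^i * (catalan i : ℝ) / (2 * 4^i) *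
          ((-1:ℝ)^(k-i) * (catalan (k-i) : ℝ) / (2 * 4^(k-i)))
        = ((-1:ℝ)^i * (-1:ℝ)^(k-i)) / (4 * ((4:ℝ)^i * (4:ℝ)^(k-i)))
            * ((catalan i : ℝ) * (catalan (k - i) : ℝ)) := by ring
      _ = (-1:ℝ)^k / (4 * 4 ^ k) * ((catalan i : ℝ) * (catalan (k - i) : ℝ)) := by
          rw [hs1, hs2]
  rw [Finset.sum_congr rfl hmid, ← Finset.mul_sum]
  have hcat : ∑ i ∈ range (k+1), ((catalan i : ℝ) * (catalan (k - i) : ℝ))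
      = (catalan (k+1) : ℝ) := by
    rw [catalan_succ' k, Nat.sum_antidiagonal_eq_sum_range_succ_mk]
    push_cast
    rfl
  rw [hcat]
  rw [show k + 2 - 0 = (k+1) + 1 from rfl, hermC_zero, hermC_succ]
  rw [show k + 2 - (k + 1 + 1) = 0 by omega, hermC_zero]
  ring

/-- The truncated binomial series `∑_{k≤m} c_k X^k` as a polynomial. -/
noncomputable def hermS (m : ℕ) : Polynomial ℝ :=
  ∑ k ∈ range (m + 1), C (hermC k) * X ^ k

lemma coeff_hermS (m n : ℕ) :
    (hermS m).coeff n = if n ≤ m then hermC n else 0 := by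
  rw [hermS, finset_sum_coeff]
  simp only [coeff_C_mul, coeff_X_pow, mul_ite, mul_one, mul_zero]
  rw [Finset.sum_ite_eq (range (m+1)) n hermC]
  simp [Nat.lt_succ_iff]

lemma X_pow_dvd_sq (m : ℕ) :
    (X : Polynomial ℝ) ^ (m + 1) ∣ hermS m * hermS m - (1 + X) := by
  rw [Polynomial.X_pow_dvd_iff]
  intro d hd
  have hdm : d ≤ m := by omega
  rw [coeff_sub, coeff_mul, Nat.sum_antidiagonal_eq_sum_range_succ_mk]
  have hterm : ∀ i ∈ range (d + 1),
      (hermS m).coeff i * (hermS m).coeff (d - i) = hermC i * hermC (d - i) := by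
    intro i hi
    have hi' : i ≤ d := Nat.lt_succ_iff.mp (mem_range.mp hi)
    rw [coeff_hermS, coeff_hermS, if_pos (le_trans hi' hdm),
      if_pos (le_trans (Nat.sub_le d i) hdm)]
  rw [Finset.sum_congr rfl hterm]
  match d, hdm with
  | 0, _ => simp [hermC_zero]
  | 1, _ =>
    simp [Finset.sum_range_succ, hermC_zero, hermC_one, coeff_one, coeff_X]
    norm_num
  | (n+2), _ =>
    rw [hermC_conv (n+2) (by omega)]
    simp [coeff_one, coeff_X]

/-- The interpolating polynomial `p_m` as a formal polynomial. -/
noncomputable def hermP (m : ℕ) : Polynomial ℝ := (hermS m).comp (X ^ 2 - 1)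

lemma hermP_sq (m : ℕ) :
    ((X:Polynomial ℝ) ^ 2 - 1) ^ (m + 1) ∣ hermP m * hermP m - X ^ 2 := by
  have h := X_pow_dvd_sq m
  have := map_dvd (Polynomial.compRingHom ((X:Polynomial ℝ)^2 - 1)) h
  simpa [hermP, sub_comp, add_comp, one_comp, X_comp, pow_comp, mul_comp,
    sub_add_eq_sub_sub] using this

lemma hermS_coeff_zero (m : ℕ) : (hermS m).coeff 0 = 1 := by
  rw [coeff_hermS, if_pos (Nat.zero_le m), hermC_zero]

lemma hermP_eval_one (m : ℕ) : (hermP m).eval 1 = 1 := by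
  rw [hermP, eval_comp]
  norm_num [← coeff_zero_eq_eval_zero, hermS_coeff_zero]

lemma hermP_eval_neg_one (m : ℕ) : (hermP m).eval (-1) = 1 := by
  rw [hermP, eval_comp]
  norm_num [← coeff_zero_eq_eval_zero, hermS_coeff_zero]

lemma hermP_dvd_one (m : ℕ) : ((X:Polynomial ℝ) - C 1) ^ (m+1) ∣ hermP m - X := by
  have hfac : ((X:Polynomial ℝ)^2 - 1) = (X - C 1) * (X + 1) := by
    simp [C_1]; ring
  have h : ((X:Polynomial ℝ) - C 1) ^ (m+1) ∣ (hermP m - X) * (hermP m + X) := by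
    have h0 := hermP_sq m
    have h2 : hermP m * hermP m - X ^ 2 = (hermP m - X) * (hermP m + X) := by ring
    rw [h2] at h0
    calc ((X:Polynomial ℝ) - C 1) ^ (m+1)
        ∣ ((X:Polynomial ℝ)^2 - 1) ^ (m+1) := by
          rw [hfac, mul_pow]; exact Dvd.intro _ rfl
      _ ∣ _ := h0
  refine (prime_X_sub_C (1:ℝ)).pow_dvd_of_dvd_mul_right _ ?_ h
  rw [Polynomial.dvd_iff_isRoot]
  simp [IsRoot, hermP_eval_one]

lemma hermP_dvd_neg_one (m : ℕ) : ((X:Polynomial ℝ) - C (-1)) ^ (m+1) ∣ hermP m + X := by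
  have hfac : ((X:Polynomial ℝ)^2 - 1) = (X - C (-1)) * (X - 1) := by
    simp [map_neg, C_1]; ring
  have h : ((X:Polynomial ℝ) - C (-1)) ^ (m+1) ∣ (hermP m + X) * (hermP m - X) := by
    have h0 := hermP_sq m
    have h2 : hermP m * hermP m - X ^ 2 = (hermP m + X) * (hermP m - X) := by ring
    rw [h2] at h0
    calc ((X:Polynomial ℝ) - C (-1)) ^ (m+1)
        ∣ ((X:Polynomial ℝ)^2 - 1) ^ (m+1) := by
          rw [hfac, mul_pow]; exact Dvd.intro _ rfl
      _ ∣ _ := h0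
  refine (prime_X_sub_C (-1:ℝ)).pow_dvd_of_dvd_mul_right _ ?_ h
  rw [Polynomial.dvd_iff_isRoot]
  simp [IsRoot, hermP_eval_neg_one]

lemma eval_iterate_deriv_zero (a : ℝ) :
    ∀ l m (p : Polynomial ℝ), l ≤ m → (X - C a) ^ (m+1) ∣ p →
      (Polynomial.derivative^[l] p).eval a = 0 := by
  intro l
  induction l with
  | zero =>
    intro m p _ hdvd
    have : (X - C a) ∣ p := (dvd_pow_self _ (Nat.succ_ne_zero m)).trans hdvd
    simpa using (Polynomial.dvd_iff_isRoot.mp this)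
  | succ l ih =>
    intro m p hlm hdvd
    obtain ⟨m', rfl⟩ : ∃ m', m = m' + 1 := ⟨m - 1, by omega⟩
    obtain ⟨q, rfl⟩ := hdvd
    rw [Function.iterate_succ_apply]
    apply ih m' _ (by omega)
    rw [derivative_mul, derivative_pow]
    apply dvd_add
    · exact ((dvd_mul_left _ _).mul_right _).mul_right _
    · exact (pow_dvd_pow _ (by omega)).mul_right _

lemma iteratedDeriv_polyeval (l : ℕ) (p : Polynomial ℝ) :
    iteratedDeriv l (fun x => p.eval x) =
      fun x => (Polynomial.derivative^[l] p).eval x := by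
  induction l generalizing p with
  | zero => simp
  | succ l ih =>
    rw [iteratedDeriv_succ']
    have hd : (deriv fun x => p.eval x) = fun x => (Polynomial.derivative p).eval x := by
      funext x; exact Polynomial.deriv p
    rw [hd, ih, Function.iterate_succ_apply]

lemma hermP_eval (m : ℕ) (x : ℝ) : (hermP m).eval x = hermiteAbsApprox m x := by
  rw [hermP, eval_comp, hermS, eval_finset_sum, hermiteAbsApprox]
  refine Finset.sum_congr rfl fun k _ => ?_
  simp only [eval_mul, eval_pow, eval_C, eval_sub, eval_one, eval_X]
  rw [hermC]
  ring

/-- `p_m` interpolates the absolute value function and its first `m` derivatives at `±1`: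
for `0 ≤ l ≤ m`, the `l`-th derivative of `x ↦ p_m(x) - x` vanishes at `x = 1` and the
`l`-th derivative of `x ↦ p_m(x) + x` vanishes at `x = -1`. -/
theorem hermiteAbsApprox_interpolates (m : ℕ) (l : ℕ) (hl : l ≤ m) :
    iteratedDeriv l (fun x => hermiteAbsApprox m x - x) 1 = 0 ∧
    iteratedDeriv l (fun x => hermiteAbsApprox m x + x) (-1) = 0 := by
  constructor
  · have hfun : (fun x => hermiteAbsApprox m x - x) =
        fun x => (hermP m - X).eval x := by
      funext x; simp [hermP_eval]
    rw [hfun, iteratedDeriv_polyeval]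
    exact eval_iterate_deriv_zero 1 l m _ hl (hermP_dvd_one m)
  · have hfun : (fun x => hermiteAbsApprox m x + x) =
        fun x => (hermP m + X).eval x := by
      funext x; simp [hermP_eval]
    rw [hfun, iteratedDeriv_polyeval]
    exact eval_iterate_deriv_zero (-1) l m _ hl (hermP_dvd_neg_one m)
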